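/- arXiv:2404.01732 — 2 statements merged into one kernel-verified Lean document; each statement's English description precedes it below -/
import Mathlib

section
/- Let D_T ⊂ D, let g ∈ L²(D) with supp g ⊂ D_T, and let φ ∈ H¹₀(D) solve a(φ, v) = (g, v)_{L²(D)} for all v ∈ H¹₀(D), while φ^loc ∈ H¹₀(D_T) solves a(φ^loc, v) = (g, v)_{L²(D_T)} for all v ∈ H¹₀(D_T). Suppose E : H¹_Γ(D_T) → H¹_Γ(D_T) is a linear operator with a(E b, w) = 0 for all w ∈ H¹₀(D_T) and v − E v ∈ H¹₀(D_T) (extended by zero) for all v. Then for all v ∈ H¹₀(D), a(φ − φ^loc, v) = (g, E v)_{L²(D_T)}. -/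
/-- Localization error identity: `a(φ - φ^loc, v) = (g, E v)` for all `v ∈ H¹₀(D)`.
`X` is a vector space of functions on `D`, `a` the (symmetric) bilinear form,
`L g v` the `L²` pairing `(g, v)`, `H0D`, `H0DT`, `HGamma` the subspaces
`H¹₀(D)`, `H¹₀(D_T)` (extended by zero) and `H¹_Γ(D_T)`, and `E` the
`A`-harmonic extension of the trace. -/
theorem localization_error_identity
    {X : Type*} [AddCommGroup X] [Module ℝ X]
    (a : X →ₗ[ℝ] X →ₗ[ℝ] ℝ) (hsymm : ∀ u v : X, a u v = a v u)
    (L : X →ₗ[ℝ] X →ₗ[ℝ] ℝ)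
    (H0D H0DT HGamma : Submodule ℝ X) (hsub : H0DT ≤ HGamma)
    (E : X →ₗ[ℝ] X)
    (hEharm : ∀ b : X, ∀ w ∈ H0DT, a (E b) w = 0)
    (hEdiff : ∀ v ∈ H0D, v - E v ∈ H0DT)
    (g φ φloc : X) (hφ : φ ∈ H0D) (hφloc : φloc ∈ H0DT)
    (hglob : ∀ v ∈ H0D, a φ v = L g v)
    (hloc : ∀ v ∈ H0DT, a φloc v = L g v) :
    ∀ v ∈ H0D, a (φ - φloc) v = L g (E v) := by
  intro v hv
  have h1 : a φloc (v - E v) = L g (v - E v) := hloc _ (hEdiff v hv)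
  have h2 : a φloc (E v) = 0 := by rw [hsymm]; exact hEharm v φloc hφloc
  have h3 : a φloc v = L g v - L g (E v) := by
    have := h1
    simp [map_sub] at this ⊢
    linarith [h2]
  simp [map_sub, hglob v hv, h3]
end

section
/- Under the assumptions of the preceding correction-operator setup and assuming the maps A ↦ C_A b are Fréchet differentiable, the Fréchet derivative of A ↦ a_A((1 − C_A) b_T, b_K) in direction δA equals ∫ δA ∇b_T·∇b_K − ∫ δA ∇(C_A b_T)·∇b_K − ∫ δA ∇b_T·∇(C_A b_K) + ∫ δA ∇(C_A b_T)·∇(C_A b_K). -/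
/-- Fréchet derivative of the LOD right-hand sides `A ↦ a_A((1 - C_A) b_T, b_K)`:
it equals `δA ↦ ∫ δA ∇b_T·∇b_K − ∫ δA ∇(C_A b_T)·∇b_K − ∫ δA ∇b_T·∇(C_A b_K)
+ ∫ δA ∇(C_A b_T)·∇(C_A b_K)`. Here `B A u w = ∫ A ∇u·∇w` is linear in the
coefficient `A`, and `C_A` is the fine-scale correction operator with range in
the closed subspace `W`. -/
theorem frechet_derivative_lod_rhs
    {𝔄 X : Type*} [NormedAddCommGroup 𝔄] [NormedSpace ℝ 𝔄]
    [NormedAddCommGroup X] [NormedSpace ℝ X]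
    (B : 𝔄 →L[ℝ] X →L[ℝ] X →L[ℝ] ℝ)
    (hsymm : ∀ (A : 𝔄) (u w : X), B A u w = B A w u)
    (W : Submodule ℝ X) (hWclosed : IsClosed (W : Set X))
    (C : 𝔄 → X → X)
    (hCmem : ∀ (A : 𝔄) (u : X), C A u ∈ W)
    (hCdef : ∀ (A : 𝔄) (u : X), ∀ w ∈ W, B A (C A u) w = B A u w)
    (bT bK : X) (A0 : 𝔄)
    (CT' CK' : 𝔄 →L[ℝ] X)
    (hCTdiff : HasFDerivAt (fun A => C A bT) CT' A0)
    (hCKdiff : HasFDerivAt (fun A => C A bK) CK' A0)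
    (hCT'mem : ∀ δA, CT' δA ∈ W) (hCK'mem : ∀ δA, CK' δA ∈ W) :
    ∃ D : 𝔄 →L[ℝ] ℝ,
      HasFDerivAt (fun A => B A (bT - C A bT) bK) D A0 ∧
      ∀ δA, D δA =
        B δA bT bK - B δA (C A0 bT) bK - B δA bT (C A0 bK)
          + B δA (C A0 bT) (C A0 bK) := by
  have hB : HasFDerivAt (fun A : 𝔄 => B A) B A0 :=
    ContinuousLinearMap.hasFDerivAt (𝕜 := ℝ) (E := 𝔄) (F := X →L[ℝ] X →L[ℝ] ℝ)
      (f := B) (x := A0)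
  -- key identity: differentiate B A (C A bT) w = B A bT w for fixed w ∈ W
  have key : ∀ w ∈ W, ∀ δA, B A0 (CT' δA) w = B δA bT w - B δA (C A0 bT) w := by
    intro w hw δA
    have h1 : HasFDerivAt (fun A => B A (C A bT) w)
        ((((B A0).comp CT' + B.flip (C A0 bT)).flip w)) A0 := by
      have := (hB.clm_apply hCTdiff).clm_apply (hasFDerivAt_const w A0)
      simpa using this
    have h2 : HasFDerivAt (fun A => B A bT w)
        (((B.flip bT).flip w)) A0 := by
      have := (hB.clm_apply (hasFDerivAt_const bT A0)).clm_apply (hasFDerivAt_const w A0)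
      simpa using this
    have heq : (fun A => B A (C A bT) w) = fun A => B A bT w := by
      funext A; exact hCdef A bT w hw
    rw [heq] at h1
    have := h1.unique h2
    have happ := congrArg (fun (L : 𝔄 →L[ℝ] ℝ) => L δA) this
    simp only [ContinuousLinearMap.flip_apply, ContinuousLinearMap.add_apply,
      ContinuousLinearMap.comp_apply] at happ
    linarith
  -- main derivative via product rule
  have hu : HasFDerivAt (fun A => bT - C A bT) (-CT') A0 := by
    rw [← zero_sub]; exact (hasFDerivAt_const bT A0).sub hCTdiff
  have hmain : HasFDerivAt (fun A => B A (bT - C A bT) bK)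
      ((((B A0).comp (-CT') + B.flip (bT - C A0 bT)).flip bK)) A0 := by
    have := (hB.clm_apply hu).clm_apply (hasFDerivAt_const bK A0)
    simpa using this
  refine ⟨_, hmain, fun δA => ?_⟩
  simp only [ContinuousLinearMap.flip_apply, ContinuousLinearMap.add_apply,
    ContinuousLinearMap.comp_apply, ContinuousLinearMap.neg_apply, map_sub, map_neg,
    ContinuousLinearMap.sub_apply]
  have e1 : B A0 (CT' δA) bK = B A0 (CT' δA) (C A0 bK) := by
    rw [hsymm A0 (CT' δA) bK, ← hCdef A0 bK (CT' δA) (hCT'mem δA),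
      hsymm A0 (C A0 bK) (CT' δA)]
  have e2 := key (C A0 bK) (hCmem A0 bK) δA
  linarith [e1, e2]
end
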